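/- arXiv:1409.1878 — 3 statements merged into one kernel-verified Lean document; each statement's English description precedes it below -/
import Mathlib

section
/- Let E be a real normed vector space, let D ≥ 0, and let A ⊆ E be a D-quasiconvex subset, i.e. for all x, y ∈ A the segment [x, y] is contained in the closed D-neighborhood of A. Define hull¹(B) = ⋃_{x,y ∈ B} [x, y], the union of all segments with endpoints in B, and inductively hullⁱ(B) = hull¹(hullⁱ⁻¹(B)). Then for every i ≥ 1, hullⁱ(A) is contained in the closed (i·D)-neighborhood of A. -/
/-- `segHull B` is the union of all segments with both endpoints in `B`. -/
def segHull {E : Type*} [AddCommGroup E] [Module ℝ E] (B : Set E) : Set E :=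
  ⋃ x ∈ B, ⋃ y ∈ B, segment ℝ x y

/-- `segHullIter i B` is the `i`-fold iterated segment hull of `B`. -/
def segHullIter {E : Type*} [AddCommGroup E] [Module ℝ E] : ℕ → Set E → Set E
  | 0, B => B
  | (i + 1), B => segHull (segHullIter i B)

lemma mem_cthick_iff {E : Type*} [NormedAddCommGroup E] {δ : ℝ} (hδ : 0 ≤ δ)
    {s : Set E} (hne : s.Nonempty) {x : E} :
    x ∈ Metric.cthickening δ s ↔ Metric.infDist x s ≤ δ := by
  rw [Metric.mem_cthickening_iff, Metric.infDist,
    ← ENNReal.le_ofReal_iff_toReal_le (Metric.infEdist_ne_top hne) hδ]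

lemma segHull_step {E : Type*} [NormedAddCommGroup E] [NormedSpace ℝ E]
    (D c : ℝ) (hD : 0 ≤ D) (hc : 0 ≤ c) (A : Set E)
    (hA : ∀ x ∈ A, ∀ y ∈ A, segment ℝ x y ⊆ Metric.cthickening D A)
    (S : Set E) (hS : S ⊆ Metric.cthickening c A) :
    segHull S ⊆ Metric.cthickening (c + D) A := by
  intro z hz
  simp only [segHull, Set.mem_iUnion] at hz
  obtain ⟨x, hx, y, hy, hzseg⟩ := hz
  obtain ⟨t, s, ht, hs, hts, rfl⟩ := hzseg
  have hxA := hS hx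
  have hyA := hS hy
  have hAne : A.Nonempty := by
    by_contra h
    rw [Set.not_nonempty_iff_eq_empty] at h
    simp [h, Metric.cthickening_empty] at hxA
  have hdx : Metric.infDist x A ≤ c :=
    (mem_cthick_iff hc hAne).1 hxA
  have hdy : Metric.infDist y A ≤ c :=
    (mem_cthick_iff hc hAne).1 hyA
  rw [mem_cthick_iff (by linarith) hAne]
  refine le_of_forall_pos_le_add ?_
  intro ε hε
  obtain ⟨a, haA, hax⟩ := (Metric.infDist_lt_iff hAne).1
    (lt_of_le_of_lt hdx (by linarith : c < c + ε))
  obtain ⟨b, hbA, hby⟩ := (Metric.infDist_lt_iff hAne).1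
    (lt_of_le_of_lt hdy (by linarith : c < c + ε))
  set w := t • a + s • b with hw
  have hwseg : w ∈ segment ℝ a b := ⟨t, s, ht, hs, hts, rfl⟩
  have hwD : Metric.infDist w A ≤ D :=
    (mem_cthick_iff hD hAne).1 (hA a haA b hbA hwseg)
  have hdistzw : dist (t • x + s • y) w ≤ c + ε := by
    have : t • x + s • y - w = t • (x - a) + s • (y - b) := by
      simp only [hw, smul_sub]; abel
    rw [dist_eq_norm, this]
    calc ‖t • (x - a) + s • (y - b)‖ ≤ ‖t • (x - a)‖ + ‖s • (y - b)‖ := norm_add_le _ _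
      _ = t * ‖x - a‖ + s * ‖y - b‖ := by
          rw [norm_smul, norm_smul, Real.norm_of_nonneg ht, Real.norm_of_nonneg hs]
      _ ≤ t * (c + ε) + s * (c + ε) := by
          have h1 : ‖x - a‖ < c + ε := by rwa [← dist_eq_norm]
          have h2 : ‖y - b‖ < c + ε := by rwa [← dist_eq_norm]
          have := mul_le_mul_of_nonneg_left h1.le ht
          have := mul_le_mul_of_nonneg_left h2.le hs
          nlinarith
      _ = c + ε := by rw [← add_mul, hts, one_mul]
  calc Metric.infDist (t • x + s • y) A ≤ Metric.infDist w A + dist (t • x + s • y) w :=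
        Metric.infDist_le_infDist_add_dist
    _ ≤ D + (c + ε) := add_le_add hwD hdistzw
    _ = c + D + ε := by ring

/-- If `A` is `D`-quasiconvex in a real normed space, then for every `i ≥ 1` the
`i`-fold iterated segment hull of `A` is contained in the closed `i·D`-neighborhood
of `A`. -/
theorem stmt_5 {E : Type*} [NormedAddCommGroup E] [NormedSpace ℝ E]
    (D : ℝ) (hD : 0 ≤ D) (A : Set E)
    (hA : ∀ x ∈ A, ∀ y ∈ A, segment ℝ x y ⊆ Metric.cthickening D A)
    (i : ℕ) (hi : 1 ≤ i) :
    segHullIter i A ⊆ Metric.cthickening ((i : ℝ) * D) A := by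
  clear hi
  induction i with
  | zero => simpa [segHullIter] using subset_closure
  | succ n ih =>
      have h := segHull_step D ((n : ℝ) * D) hD (by positivity) A hA _ ih
      have : ((n : ℝ) * D + D) = ((n + 1 : ℕ) : ℝ) * D := by push_cast; ring
      rw [this] at h
      exact h
end

section
/- Let E be a finite-dimensional real normed vector space of dimension n, let D ≥ 0, and let A ⊆ E be a D-quasiconvex subset, i.e. for all x, y ∈ A the segment [x, y] is contained in the closed D-neighborhood of A. Then the convex hull of A is contained in the closed (n·D)-neighborhood of A. -/
open Metric Set

lemma mem_cthickening_iff_infDist_le' {X : Type*} [PseudoMetricSpace X]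
    {δ : ℝ} (hδ : 0 ≤ δ) {s : Set X} (hs : s.Nonempty) {x : X} :
    x ∈ Metric.cthickening δ s ↔ Metric.infDist x s ≤ δ := by
  rw [Metric.mem_cthickening_iff, Metric.infDist,
    ENNReal.le_ofReal_iff_toReal_le (Metric.infEdist_ne_top hs) hδ]

/-- Key segment estimate: if `p` lies on a segment from a point of `A` to `z`,
then `infDist p A ≤ D + infDist z A`. -/
lemma seg_estimate {E : Type*} [NormedAddCommGroup E] [NormedSpace ℝ E]
    (D : ℝ) (hD : 0 ≤ D) (A : Set E)
    (hA : ∀ x ∈ A, ∀ y ∈ A, segment ℝ x y ⊆ Metric.cthickening D A)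
    {x z p : E} (hxA : x ∈ A) (hp : p ∈ segment ℝ x z) :
    Metric.infDist p A ≤ D + Metric.infDist z A := by
  have hAne : A.Nonempty := ⟨x, hxA⟩
  obtain ⟨a', b', ha, hb, hab, hpe⟩ := hp
  refine le_of_forall_pos_le_add fun ε hε => ?_
  obtain ⟨a, haA, hdz⟩ := (Metric.infDist_lt_iff hAne).1
    (show Metric.infDist z A < Metric.infDist z A + ε by linarith)
  set p' : E := a' • x + b' • a with hp'
  have hp'seg : p' ∈ segment ℝ x a := ⟨a', b', ha, hb, hab, rfl⟩
  have hp'th : Metric.infDist p' A ≤ D :=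
    (mem_cthickening_iff_infDist_le' hD hAne).1 (hA x hxA a haA hp'seg)
  have hdist : dist p p' ≤ dist z a := by
    rw [← hpe, hp', dist_add_left, dist_smul₀]
    calc ‖b'‖ * dist z a ≤ 1 * dist z a := by
          apply mul_le_mul_of_nonneg_right _ dist_nonneg
          rw [Real.norm_eq_abs, abs_of_nonneg hb]; linarith
      _ = dist z a := one_mul _
  calc Metric.infDist p A ≤ Metric.infDist p' A + dist p p' :=
        Metric.infDist_le_infDist_add_dist
    _ ≤ D + dist z a := add_le_add hp'th hdist
    _ ≤ D + Metric.infDist z A + ε := by linarith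

/-- If `A` is a `D`-quasiconvex subset of an `n`-dimensional real normed space
(every segment with endpoints in `A` lies in the closed `D`-neighborhood of `A`),
then the convex hull of `A` is contained in the closed `n·D`-neighborhood of `A`. -/
theorem stmt_6 {E : Type*} [NormedAddCommGroup E] [NormedSpace ℝ E]
    [FiniteDimensional ℝ E] (n : ℕ) (hn : Module.finrank ℝ E = n)
    (D : ℝ) (hD : 0 ≤ D) (A : Set E)
    (hA : ∀ x ∈ A, ∀ y ∈ A, segment ℝ x y ⊆ Metric.cthickening D A) :
    convexHull ℝ A ⊆ Metric.cthickening ((n : ℝ) * D) A := by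
  -- key induction: hull of a finite subset s of A is within (card s - 1) * D of A
  have key : ∀ (s : Finset E), ↑s ⊆ A →
      convexHull ℝ (s : Set E) ⊆ Metric.cthickening (((s.card : ℝ) - 1) * D) A := by
    intro s
    induction s using Finset.cons_induction with
    | empty => simp
    | cons x u hx ih =>
      intro hsub
      have hxA : x ∈ A := hsub (Finset.mem_cons_self x u)
      have huA : ↑u ⊆ A := fun y hy => hsub (Finset.mem_cons.2 (Or.inr hy))
      have hAne : A.Nonempty := ⟨x, hxA⟩
      rcases u.eq_empty_or_nonempty with rfl | hu
      · intro p hp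
        simp only [Finset.cons_empty, Finset.coe_singleton, convexHull_singleton,
          Set.mem_singleton_iff] at hp
        have h0 : ((Finset.cons x (∅ : Finset E) hx).card : ℝ) - 1 = 0 := by simp
        rw [h0, zero_mul, hp]
        exact Metric.self_subset_cthickening A hxA
      · intro p hp
        rw [Finset.coe_cons, convexHull_insert (Finset.coe_nonempty.2 hu),
          mem_convexJoin] at hp
        obtain ⟨x', hx', z, hz, hpseg⟩ := hp
        rw [Set.mem_singleton_iff] at hx'
        rw [hx'] at hpseg
        have hz' : Metric.infDist z A ≤ ((u.card : ℝ) - 1) * D := by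
          have hcard : (1 : ℝ) ≤ (u.card : ℝ) := by
            exact_mod_cast Nat.one_le_iff_ne_zero.2 (Finset.card_ne_zero_of_mem hu.choose_spec)
          have hpos : 0 ≤ ((u.card : ℝ) - 1) * D :=
            mul_nonneg (by linarith) hD
          exact (mem_cthickening_iff_infDist_le' hpos hAne).1 (ih huA hz)
        have hle := seg_estimate D hD A hA hxA hpseg
        have hcard : ((Finset.cons x u hx).card : ℝ) - 1 = (u.card : ℝ) := by
          rw [Finset.card_cons]; push_cast; ring
        have hnn : 0 ≤ (((Finset.cons x u hx).card : ℝ) - 1) * D := by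
          rw [hcard]; positivity
        rw [mem_cthickening_iff_infDist_le' hnn hAne, hcard]
        calc Metric.infDist p A ≤ D + Metric.infDist z A := hle
          _ ≤ D + ((u.card : ℝ) - 1) * D := by linarith
          _ = (u.card : ℝ) * D := by ring
  intro p hp
  have hAn : A.Nonempty := by
    by_contra h
    rw [Set.not_nonempty_iff_eq_empty] at h
    simp [h] at hp
  rw [convexHull_eq_union] at hp
  simp only [Set.mem_iUnion] at hp
  obtain ⟨t, hts, hai, hpt⟩ := hp
  have hcard : t.card ≤ n + 1 := by
    have h1 := hai.card_le_finrank_succ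
    simp only [Fintype.card_coe] at h1
    have h2 := Submodule.finrank_le (vectorSpan ℝ (Set.range ((↑) : t → E)))
    omega
  have h1 := key t hts hpt
  have hmono : ((t.card : ℝ) - 1) * D ≤ (n : ℝ) * D := by
    apply mul_le_mul_of_nonneg_right _ hD
    have : (t.card : ℝ) ≤ (n : ℝ) + 1 := by exact_mod_cast hcard
    linarith
  exact Metric.cthickening_mono hmono A h1
end

section
/- Let E be a real inner product space and let v, a, b ∈ E with a ≠ v and b ≠ v. If the angle ∠(a, v, b) at the vertex v is strictly less than 2π/3, then there exists a point p ∈ E with dist(v,p) + dist(p,a) + dist(p,b) < dist(v,a) + dist(v,b). -/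
/-!
Put `v` at the origin and let `w = a/‖a‖ + b/‖b‖` be the sum of the unit vectors towards `a` and
`b`. Moving from `v` to `t • w` costs `t‖w‖` on the first edge and, to first order, saves
`t⟪a/‖a‖, w⟫ + t⟪b/‖b‖, w⟫ = t‖w‖²` on the other two, so the total length changes by
`t‖w‖(1 - ‖w‖) + O(t²)`. Since `‖w‖² = 2 + 2 cos ∠(a, v, b)`, we have `‖w‖ > 1` exactly when the
angle is less than `2π/3`, and then a small `t > 0` shortens the graph.
-/

open Real

open InnerProductGeometry RealInnerProductSpace

section

variable {E : Type*} [NormedAddCommGroup E] [InnerProductSpace ℝ E]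

theorem norm_sub_smul_le {x : E} (hx : x ≠ 0) (y : E) (t : ℝ) :
    ‖x - t • y‖ ≤ ‖x‖ - t * (⟪x, y⟫ / ‖x‖) + t ^ 2 * ‖y‖ ^ 2 / (2 * ‖x‖) := by
  have hx' : 0 < ‖x‖ := norm_pos_iff.mpr hx
  have hsq : ‖x - t • y‖ ^ 2 = ‖x‖ ^ 2 - 2 * t * ⟪x, y⟫ + t ^ 2 * ‖y‖ ^ 2 := by
    rw [norm_sub_sq_real, real_inner_smul_right, norm_smul, mul_pow, Real.norm_eq_abs, sq_abs]
    ring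
  have hamgm : 2 * ‖x‖ * ‖x - t • y‖ ≤ ‖x - t • y‖ ^ 2 + ‖x‖ ^ 2 := by
    nlinarith [sq_nonneg (‖x - t • y‖ - ‖x‖)]
  have hgap : ‖x‖ - t * (⟪x, y⟫ / ‖x‖) + t ^ 2 * ‖y‖ ^ 2 / (2 * ‖x‖) - ‖x - t • y‖
      = (‖x - t • y‖ ^ 2 + ‖x‖ ^ 2 - 2 * ‖x‖ * ‖x - t • y‖) / (2 * ‖x‖) := by
    rw [hsq]
    field_simp
    ring
  rw [← sub_nonneg, hgap]
  exact div_nonneg (by linarith) (by positivity)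

theorem one_lt_norm_add_of_angle_lt {x y : E} (hx : x ≠ 0) (hy : y ≠ 0)
    (h : angle x y < 2 * π / 3) : 1 < ‖‖x‖⁻¹ • x + ‖y‖⁻¹ • y‖ := by
  have hcos : ⟪‖x‖⁻¹ • x, ‖y‖⁻¹ • y⟫ = cos (angle x y) := by
    rw [cos_angle, real_inner_smul_left, real_inner_smul_right]
    field_simp
  have hcos_gt : -(1 / 2) < cos (angle x y) := by
    rw [← show cos (2 * π / 3) = -(1 / 2) by
      rw [show 2 * π / 3 = π - π / 3 by ring, cos_pi_sub, cos_pi_div_three]]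
    exact cos_lt_cos_of_nonneg_of_le_pi (angle_nonneg x y) (by linarith [pi_pos]) h
  have hunit {z : E} (hz : z ≠ 0) : ‖‖z‖⁻¹ • z‖ = 1 := by
    rw [norm_smul, norm_inv, norm_norm, inv_mul_cancel₀ (norm_ne_zero_iff.mpr hz)]
  have hsq : 1 < ‖‖x‖⁻¹ • x + ‖y‖⁻¹ • y‖ ^ 2 := by
    rw [norm_add_sq_real, hunit hx, hunit hy, hcos]
    linarith
  nlinarith [norm_nonneg (‖x‖⁻¹ • x + ‖y‖⁻¹ • y)]

theorem exists_norm_add_norm_sub_add_norm_sub_lt {x y : E} (hx : x ≠ 0) (hy : y ≠ 0)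
    (h : angle x y < 2 * π / 3) : ∃ q : E, ‖q‖ + ‖x - q‖ + ‖y - q‖ < ‖x‖ + ‖y‖ := by
  set w := ‖x‖⁻¹ • x + ‖y‖⁻¹ • y
  have hw : 1 < ‖w‖ := one_lt_norm_add_of_angle_lt hx hy h
  have hinner : ⟪x, w⟫ / ‖x‖ + ⟪y, w⟫ / ‖y‖ = ‖w‖ ^ 2 := by
    rw [← real_inner_self_eq_norm_sq]
    simp only [w, inner_add_left, real_inner_smul_left]
    ring
  set α := ‖w‖ * (‖w‖ - 1)
  set M := ‖w‖ ^ 2 / (2 * ‖x‖) + ‖w‖ ^ 2 / (2 * ‖y‖)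
  have hα : 0 < α := mul_pos (by linarith) (by linarith)
  have hM : 0 ≤ M := by positivity
  set t := α / (M + 1)
  have ht : 0 < t := by positivity
  have hgain : t * M < α := by
    rw [div_mul_eq_mul_div, div_lt_iff₀ (by positivity)]
    nlinarith
  refine ⟨t • w, ?_⟩
  calc ‖t • w‖ + ‖x - t • w‖ + ‖y - t • w‖
      ≤ t * ‖w‖ + (‖x‖ - t * (⟪x, w⟫ / ‖x‖) + t ^ 2 * ‖w‖ ^ 2 / (2 * ‖x‖))
        + (‖y‖ - t * (⟪y, w⟫ / ‖y‖) + t ^ 2 * ‖w‖ ^ 2 / (2 * ‖y‖)) := by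
        rw [norm_smul, Real.norm_of_nonneg ht.le]
        gcongr <;> exact norm_sub_smul_le ‹_› w t
    _ = ‖x‖ + ‖y‖ - t * (α - t * M) := by linear_combination (-t) * hinner
    _ < ‖x‖ + ‖y‖ := sub_lt_self _ (mul_pos ht (by linarith))

end

/-- In a real inner product space, if the angle `∠ a v b` at the vertex `v` is
strictly less than `2π/3` (with `a ≠ v` and `b ≠ v`), then there is a point `p`
with `dist v p + dist p a + dist p b < dist v a + dist v b`. -/
theorem stmt_8 {E : Type*} [NormedAddCommGroup E] [InnerProductSpace ℝ E]
    (v a b : E) (ha : a ≠ v) (hb : b ≠ v)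
    (hangle : EuclideanGeometry.angle a v b < 2 * π / 3) :
    ∃ p : E, dist v p + dist p a + dist p b < dist v a + dist v b := by
  obtain ⟨q, hq⟩ := exists_norm_add_norm_sub_add_norm_sub_lt
    (sub_ne_zero.mpr ha) (sub_ne_zero.mpr hb) hangle
  refine ⟨v + q, ?_⟩
  rw [dist_comm v, dist_comm _ a, dist_comm _ b, dist_comm v a, dist_comm v b]
  simpa only [dist_eq_norm, add_sub_cancel_left, sub_add_eq_sub_sub] using hq
end
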